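/- Consider the Game of Graph Nim on the graph with vertices A, B, C, D and edges AB, BC, CD, DB (a triangle BCD with a pendant edge AB attached at B). A configuration of positive edge weights is losing if and only if w(BC) = w(DB) and w(CD) = w(AB) + w(BC). -/
import Mathlib


namespace GraphNim

variable {V E : Type} [Fintype E]

/-- A legal move in the Game of Graph Nim: choose a vertex `v` and weakly decrease
the weights of edges incident to `v` (all other edges unchanged), strictly
decreasing the total weight. -/
def Move (inc : V → E → Prop) (w w' : E → ℕ) : Prop :=
  ∃ v : V, (∀ e, w' e ≤ w e) ∧ (∀ e, ¬ inc v e → w' e = w e) ∧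
    (∑ e, w' e) < (∑ e, w e)

/-- A configuration is losing for the player to move: every legal move leads to a
non-losing configuration (the all-zero configuration is vacuously losing). -/
def Losing (inc : V → E → Prop) (w : E → ℕ) : Prop :=
  ∀ w', Move inc w w' → ¬ Losing inc w'
termination_by ∑ e, w e
decreasing_by
  rename_i h
  obtain ⟨v, _, _, h3⟩ := h
  exact h3

/-- A configuration is winning for the player to move: some legal move leads to a
losing configuration. -/
def Winning (inc : V → E → Prop) (w : E → ℕ) : Prop :=
  ∃ w', Move inc w w' ∧ Losing inc w'

end GraphNim

open GraphNim

/-- Endpoints of the edges of the graph `F₂`: vertices `A = 0, B = 1, C = 2, D = 3`,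
edges `AB = 0, BC = 1, CD = 2, DB = 3`. -/
def f2Ends : Fin 4 → Fin 4 × Fin 4
  | 0 => (0, 1)
  | 1 => (1, 2)
  | 2 => (2, 3)
  | 3 => (3, 1)

def f2Inc (v e : Fin 4) : Prop := (f2Ends e).1 = v ∨ (f2Ends e).2 = v

instance : ∀ v e, Decidable (f2Inc v e) := fun v e => by unfold f2Inc; infer_instance

/-- The invariant: P-positions of the game on `F₂`. -/
def F2P (w : Fin 4 → ℕ) : Prop := w 1 = w 3 ∧ w 2 = w 0 + w 1

lemma sum4 (w : Fin 4 → ℕ) : ∑ e, w e = w 0 + w 1 + w 2 + w 3 := by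
  simp [Fin.sum_univ_four]

lemma F2P_move {w w' : Fin 4 → ℕ} (hP : F2P w) (hm : Move f2Inc w w') : ¬ F2P w' := by
  obtain ⟨v, hle, hfix, hlt⟩ := hm
  rintro ⟨h1', h2'⟩
  obtain ⟨h1, h2⟩ := hP
  rw [sum4, sum4] at hlt
  have l0 := hle 0; have l1 := hle 1; have l2 := hle 2; have l3 := hle 3
  fin_cases v
  · have e1 := hfix 1 (by decide); have e2 := hfix 2 (by decide)
    have e3 := hfix 3 (by decide); omega
  · have e2 := hfix 2 (by decide); omega
  · have e0 := hfix 0 (by decide); have e3 := hfix 3 (by decide); omega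
  · have e0 := hfix 0 (by decide); have e1 := hfix 1 (by decide); omega

lemma F2P_reach {w : Fin 4 → ℕ} (hP : ¬ F2P w) : ∃ w', Move f2Inc w w' ∧ F2P w' := by
  simp only [F2P, not_and] at hP
  by_cases hc : w 0 + min (w 1) (w 3) ≤ w 2
  · by_cases hd : w 1 ≤ w 3
    · -- move at vertex D = 3, touching edges 2, 3
      refine ⟨![w 0, w 1, w 0 + w 1, w 1], ⟨3, ?_, ?_, ?_⟩, ?_, ?_⟩
      · intro e; fin_cases e <;> simp <;> omega
      · intro e he; fin_cases e <;> first | rfl | exact absurd (by decide) he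
      · rw [sum4, sum4]; simp; omega
      · simp
      · simp
    · -- move at vertex C = 2, touching edges 1, 2
      refine ⟨![w 0, w 3, w 0 + w 3, w 3], ⟨2, ?_, ?_, ?_⟩, ?_, ?_⟩
      · intro e; fin_cases e <;> simp <;> omega
      · intro e he; fin_cases e <;> first | rfl | exact absurd (by decide) he
      · rw [sum4, sum4]; simp; omega
      · simp
      · simp
  · -- move at vertex B = 1, touching edges 0, 1, 3
    set y := min (min (w 1) (w 3)) (w 2) with hy
    refine ⟨![w 2 - y, y, w 2, y], ⟨1, ?_, ?_, ?_⟩, ?_, ?_⟩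
    · intro e; fin_cases e <;> simp <;> omega
    · intro e he; fin_cases e <;> first | rfl | exact absurd (by decide) he
    · rw [sum4, sum4]; simp; omega
    · simp
    · simp; omega

lemma losing_aux : ∀ n (w : Fin 4 → ℕ), (∑ e, w e) = n → (Losing f2Inc w ↔ F2P w) := by
  intro n
  induction n using Nat.strong_induction_on with
  | _ n ih =>
    intro w hw
    constructor
    · intro hL
      by_contra hP
      obtain ⟨w', hm, hP'⟩ := F2P_reach hP
      obtain ⟨v, h1, h2, hlt⟩ := hm
      have hL' : Losing f2Inc w' := (ih _ (hw ▸ hlt) w' rfl).mpr hP'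
      rw [Losing] at hL
      exact hL w' ⟨v, h1, h2, hlt⟩ hL'
    · intro hP
      rw [Losing]
      intro w' hm hL'
      obtain ⟨v, h1, h2, hlt⟩ := hm
      exact F2P_move hP ⟨v, h1, h2, hlt⟩ ((ih _ (hw ▸ hlt) w' rfl).mp hL')

/-- On `F₂` (triangle `BCD` with pendant edge `AB`), a configuration of positive
edge weights is losing iff `w(BC) = w(DB)` and `w(CD) = w(AB) + w(BC)`. -/
theorem f2_losing_iff (w : Fin 4 → ℕ) (hpos : ∀ e, 0 < w e) :
    Losing f2Inc w ↔ (w 1 = w 3 ∧ w 2 = w 0 + w 1) := by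
  exact losing_aux _ w rfl
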